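/- arXiv:2105.08033 — 7 statements merged into one kernel-verified Lean document; each statement's English description precedes it below -/
import Mathlib

section
/- Let h ∈ ℂ with h ∉ 2πi·ℚ and q := exp(h). For m₀ ∈ ℂ, the following are equivalent: (i) q^{2m₀+k} ≠ −1 for all k ∈ ℤ; (ii) for all m₁, m₂ ∈ m₀ + ℤ with m₁ ≠ m₂ one has [m₁] ≠ [m₂]. Here q^b := exp(h·b) and [b] := (q^b − q^{−b})/(q − q^{−1}). -/
/-- `q^b := exp(h·b)`. -/
noncomputable def qpow (h b : ℂ) : ℂ := Complex.exp (h * b)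

/-- the q-number `[b] := (q^b − q^{−b})/(q − q^{−1})` where `q = exp h`. -/
noncomputable def qnum (h b : ℂ) : ℂ :=
  (Complex.exp (h * b) - Complex.exp (-(h * b))) / (Complex.exp h - Complex.exp (-h))

lemma aux_hexp (h : ℂ) (hh : ∀ r : ℚ, h ≠ 2 * Real.pi * Complex.I * r) :
    ∀ n : ℤ, Complex.exp (h * n) = 1 → n = 0 := by
  intro n hn
  by_contra hn0
  rw [Complex.exp_eq_one_iff] at hn
  obtain ⟨m, hm⟩ := hn
  apply hh (m / n)
  have hnC : (n : ℂ) ≠ 0 := Int.cast_ne_zero.mpr hn0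
  push_cast
  field_simp
  linear_combination hm

lemma aux_hden (h : ℂ) (hh : ∀ r : ℚ, h ≠ 2 * Real.pi * Complex.I * r) :
    Complex.exp h - Complex.exp (-h) ≠ 0 := by
  intro h0
  have he : Complex.exp h = Complex.exp (-h) := sub_eq_zero.mp h0
  have hprod : Complex.exp h * Complex.exp (-h) = 1 := by
    rw [← Complex.exp_add]; simp
  have h1 : Complex.exp (h * (2 : ℤ)) = 1 := by
    calc Complex.exp (h * (2 : ℤ)) = Complex.exp h * Complex.exp h := by
          rw [← Complex.exp_add]; norm_num; ring_nf
      _ = Complex.exp h * Complex.exp (-h) := by rw [he]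
      _ = 1 := hprod
  have := aux_hexp h hh 2 h1
  norm_num at this

theorem stmt_4 (h : ℂ) (hh : ∀ r : ℚ, h ≠ 2 * Real.pi * Complex.I * r) (m₀ : ℂ) :
    (∀ k : ℤ, qpow h (2 * m₀ + k) ≠ -1) ↔
      (∀ k₁ k₂ : ℤ, (m₀ + k₁ : ℂ) ≠ (m₀ + k₂ : ℂ) →
        qnum h (m₀ + k₁) ≠ qnum h (m₀ + k₂)) := by
  have hden := aux_hden h hh
  have key : ∀ a b : ℂ, qnum h a = qnum h b ↔
      (Complex.exp (h * a) = Complex.exp (h * b) ∨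
       Complex.exp (h * a) * Complex.exp (h * b) = -1) := by
    intro a b
    set x := Complex.exp (h * a) with hx
    set y := Complex.exp (h * b) with hy
    have hx0 : x ≠ 0 := Complex.exp_ne_zero _
    have hy0 : y ≠ 0 := Complex.exp_ne_zero _
    unfold qnum
    rw [div_eq_div_iff hden hden, mul_left_inj' hden]
    rw [Complex.exp_neg, Complex.exp_neg, ← hx, ← hy]
    constructor
    · intro hE
      have hfac : (x - y) * (x * y + 1) = 0 := by
        field_simp at hE
        linear_combination hE
      rcases mul_eq_zero.mp hfac with h1 | h1
      · left; exact sub_eq_zero.mp h1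
      · right; linear_combination h1
    · rintro (hE | hE)
      · rw [hE]
      · have hxy : y = -x⁻¹ := by
          field_simp
          linear_combination hE
        rw [hxy, inv_neg, inv_inv]
        ring
  constructor
  · intro H k₁ k₂ hne heq
    rcases (key _ _).mp heq with h1 | h1
    · apply hne
      have : Complex.exp (h * ((k₁ : ℂ) - k₂)) = 1 := by
        rw [show h * ((k₁ : ℂ) - k₂) = h * (m₀ + k₁) - h * (m₀ + k₂) by ring,
          Complex.exp_sub, h1, div_self (Complex.exp_ne_zero _)]
      have hz : ((k₁ - k₂ : ℤ) : ℂ) = (k₁ : ℂ) - k₂ := by push_cast; ring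
      have := aux_hexp h hh (k₁ - k₂) (by rw [hz]; exact this)
      have : k₁ = k₂ := by omega
      rw [this]
    · apply H (k₁ + k₂)
      unfold qpow
      rw [← Complex.exp_add] at h1
      rw [← h1]
      push_cast
      ring_nf
  · intro H k hk
    unfold qpow at hk
    rcases eq_or_ne k (-2) with rfl | hk2
    · apply H 0 (-2)
      · intro hc
        have := add_left_cancel hc
        norm_num at this
      · apply (key _ _).mpr
        right
        rw [← Complex.exp_add, ← hk]
        push_cast
        ring_nf
    · apply H (k + 1) (-1)
      · intro hc
        have h2 : (k : ℂ) = -2 := by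
          have := add_left_cancel hc
          push_cast at this
          linear_combination this
        have : k = (-2 : ℤ) := by exact_mod_cast h2
        exact hk2 this
      · apply (key _ _).mpr
        right
        rw [← Complex.exp_add, ← hk]
        push_cast
        ring_nf
end

section
/- Let h ∈ ℂ with h ∉ 2πi·ℚ and q := exp(h). For ℓ₀ ∈ ℂ, the following are equivalent: (i) q^{4ℓ₀+2k} ≠ 1 for all k ∈ ℤ; (ii) for all ℓ₁, ℓ₂ ∈ ℓ₀ + ℤ with ℓ₁ ≠ ℓ₂ one has [ℓ₁]² + q^{ℓ₁+1}[ℓ₁] ≠ [ℓ₂]² + q^{ℓ₂+1}[ℓ₂]. Here q^b := exp(h·b) and [b] := (q^b − q^{−b})/(q − q^{−1}). -/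
open Complex

lemma inv_add_mul_eq_inv_add_mul_iff {K : Type*} [Field K] {u v : K} (hu : u ≠ 0) (hv : v ≠ 0)
    (d : K) : u⁻¹ + d * u = v⁻¹ + d * v ↔ u = v ∨ d * u * v = 1 := by
  have key : u⁻¹ + d * u - (v⁻¹ + d * v) = (u - v) * (d * u * v - 1) / (u * v) := by
    field_simp
    ring
  rw [← sub_eq_zero, key, div_eq_zero_iff, mul_eq_zero, sub_eq_zero, sub_eq_zero]
  simp [hu, hv]

lemma qpow_add (h a b : ℂ) : qpow h (a + b) = qpow h a * qpow h b := by
  rw [qpow, qpow, qpow, mul_add, exp_add]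

lemma qpow_ne_zero (h b : ℂ) : qpow h b ≠ 0 :=
  exp_ne_zero _

lemma qpow_intCast_ne_one {h : ℂ} (hh : ∀ r : ℚ, h ≠ 2 * Real.pi * I * r) {n : ℤ} (hn : n ≠ 0) :
    qpow h n ≠ 1 := by
  rw [qpow, Ne, exp_eq_one_iff]
  rintro ⟨m, hm⟩
  apply hh (m / n)
  have hn' : (n : ℂ) ≠ 0 := Int.cast_ne_zero.mpr hn
  push_cast
  field_simp
  linear_combination hm

lemma qnum_sq_add_qpow_mul_qnum (h b : ℂ) :
    qnum h b ^ 2 + qpow h (b + 1) * qnum h b =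
      ((qpow h (2 * b))⁻¹ + qpow h 2 * qpow h (2 * b) - 1 - qpow h 2) /
        (exp h - exp (-h)) ^ 2 := by
  rcases eq_or_ne (exp h - exp (-h)) 0 with hd | hd
  · simp [qnum, hd]
  have hx := exp_ne_zero (h * b)
  have hc := exp_ne_zero h
  rw [qnum, qpow, qpow, qpow, show h * (b + 1) = h * b + h by ring,
    show h * (2 * b) = h * b + h * b by ring, show h * 2 = h + h by ring]
  simp only [exp_add, exp_neg] at hd ⊢
  field_simp
  ring

lemma qnum_sq_add_qpow_mul_qnum_eq_iff {h : ℂ} (hq : qpow h 2 ≠ 1) (b₁ b₂ : ℂ) :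
    qnum h b₁ ^ 2 + qpow h (b₁ + 1) * qnum h b₁ = qnum h b₂ ^ 2 + qpow h (b₂ + 1) * qnum h b₂ ↔
      qpow h (2 * b₁) = qpow h (2 * b₂) ∨ qpow h (2 * b₁ + 2 * b₂ + 2) = 1 := by
  have hd : (exp h - exp (-h)) ^ 2 ≠ 0 := by
    refine pow_ne_zero _ (sub_ne_zero.mpr fun he => hq ?_)
    rw [show (2 : ℂ) = 1 + 1 by norm_num, qpow_add, qpow, mul_one]
    nth_rewrite 2 [he]
    rw [← exp_add, add_neg_cancel, exp_zero]
  rw [qnum_sq_add_qpow_mul_qnum, qnum_sq_add_qpow_mul_qnum, div_left_inj' hd, sub_left_inj,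
    sub_left_inj, inv_add_mul_eq_inv_add_mul_iff (qpow_ne_zero _ _) (qpow_ne_zero _ _),
    qpow_add, qpow_add, mul_rotate]

theorem stmt_5 (h : ℂ) (hh : ∀ r : ℚ, h ≠ 2 * Real.pi * Complex.I * r) (ℓ₀ : ℂ) :
    (∀ k : ℤ, qpow h (4 * ℓ₀ + 2 * k) ≠ 1) ↔
      (∀ k₁ k₂ : ℤ, (ℓ₀ + k₁ : ℂ) ≠ (ℓ₀ + k₂ : ℂ) →
        (qnum h (ℓ₀ + k₁)) ^ 2 + qpow h (ℓ₀ + k₁ + 1) * qnum h (ℓ₀ + k₁) ≠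
        (qnum h (ℓ₀ + k₂)) ^ 2 + qpow h (ℓ₀ + k₂ + 1) * qnum h (ℓ₀ + k₂)) := by
  have hq : ∀ n : ℤ, n ≠ 0 → qpow h n ≠ 1 := fun n hn => qpow_intCast_ne_one hh hn
  have heq_iff : ∀ k₁ k₂ : ℤ, k₁ ≠ k₂ →
      ((qnum h (ℓ₀ + k₁)) ^ 2 + qpow h (ℓ₀ + k₁ + 1) * qnum h (ℓ₀ + k₁) =
        (qnum h (ℓ₀ + k₂)) ^ 2 + qpow h (ℓ₀ + k₂ + 1) * qnum h (ℓ₀ + k₂) ↔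
        qpow h (4 * ℓ₀ + 2 * ((k₁ + k₂ + 1 : ℤ) : ℂ)) = 1) := by
    intro k₁ k₂ hk
    have hsq : qpow h (2 * (ℓ₀ + k₁)) ≠ qpow h (2 * (ℓ₀ + k₂)) := by
      rw [show 2 * (ℓ₀ + k₁) = 2 * (ℓ₀ + k₂) + ((2 * (k₁ - k₂) : ℤ) : ℂ) by push_cast; ring,
        qpow_add, Ne, mul_eq_left₀ (qpow_ne_zero _ _)]
      exact hq _ (by omega)
    rw [qnum_sq_add_qpow_mul_qnum_eq_iff (by exact_mod_cast hq 2 two_ne_zero), or_iff_right hsq]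
    congr! 2
    push_cast
    ring
  constructor
  · intro H k₁ k₂ hne heq
    exact H _ ((heq_iff k₁ k₂ fun e => hne (by rw [e])).mp heq)
  · intro H k hk
    obtain ⟨k₁, k₂, hne, rfl⟩ : ∃ k₁ k₂ : ℤ, k₁ ≠ k₂ ∧ k₁ + k₂ + 1 = k := by
      rcases eq_or_ne k (-1) with rfl | hk'
      · exact ⟨1, -3, by norm_num, by norm_num⟩
      · exact ⟨k, -1, hk', by ring⟩
    exact H k₁ k₂ (fun e => hne (by exact_mod_cast add_left_cancel e)) ((heq_iff k₁ k₂ hne).mpr hk)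
end

section
/- Let h ∈ ℂ with h ∉ 2πi·ℚ and q := exp(h). Let f be a polynomial in two variables over ℂ. If f(q^ℓ, q^m) = 0 for every pair (ℓ, m) of half-integers (ℓ, m ∈ ½ℤ) satisfying ℓ ≥ |m| and ℓ − m ∈ ℤ, then f = 0. Here q^b := exp(h·b). -/
lemma qpow_inj (h : ℂ) (hh : ∀ r : ℚ, h ≠ 2 * Real.pi * Complex.I * r) :
    Function.Injective (fun a : ℤ => qpow h ((a : ℂ) / 2)) := by
  intro a b hab
  simp only [qpow] at hab
  rw [Complex.exp_eq_exp_iff_exists_int] at hab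
  obtain ⟨n, hn⟩ := hab
  by_contra hne
  have hab' : (a : ℂ) - b ≠ 0 := by
    intro hz
    apply hne
    exact_mod_cast sub_eq_zero.mp hz
  refine hh ((2 * n : ℚ) / ((a : ℚ) - b)) ?_
  have hcast : (((2 * n : ℚ) / ((a : ℚ) - b) : ℚ) : ℂ) = (2 * n : ℂ) / ((a : ℂ) - b) := by
    push_cast; ring
  rw [hcast]
  field_simp at hn ⊢
  linear_combination hn

lemma eval0_inj : Function.Injective (MvPolynomial.eval (Fin.elim0 : Fin 0 → ℂ)) := by
  intro p q hpq
  obtain ⟨x, rfl⟩ := MvPolynomial.C_surjective (Fin 0) p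
  obtain ⟨y, rfl⟩ := MvPolynomial.C_surjective (Fin 0) q
  simp only [MvPolynomial.eval_C] at hpq
  rw [hpq]

lemma mv1_zero (d : MvPolynomial (Fin 1) ℂ) (g : ℤ → ℂ) (hg : Function.Injective g)
    (hd : ∀ b : ℤ, MvPolynomial.eval ![g b] d = 0) : d = 0 := by
  set P := MvPolynomial.finSuccEquiv ℂ 0 d with hP
  have key : ∀ b : ℤ, Polynomial.eval (g b)
      (P.map (MvPolynomial.eval (Fin.elim0 : Fin 0 → ℂ))) = 0 := by
    intro b
    have := MvPolynomial.eval_eq_eval_mv_eval' (Fin.elim0 : Fin 0 → ℂ) (g b) d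
    have hfun : (Fin.cons (g b) (Fin.elim0 : Fin 0 → ℂ) : Fin 1 → ℂ) = ![g b] := by
      funext i; fin_cases i; rfl
    rw [hfun] at this
    rw [← this, hd b]
  have hinf : {x : ℂ | (P.map (MvPolynomial.eval (Fin.elim0 : Fin 0 → ℂ))).IsRoot x}.Infinite :=
    Set.infinite_of_injective_forall_mem hg (fun b => key b)
  have hP0 : P.map (MvPolynomial.eval (Fin.elim0 : Fin 0 → ℂ)) = 0 :=
    Polynomial.eq_zero_of_infinite_isRoot _ hinf
  have hPz : P = 0 := Polynomial.map_injective _ eval0_inj (by rw [hP0, Polynomial.map_zero])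
  apply (MvPolynomial.finSuccEquiv ℂ 0).injective
  rw [map_zero, ← hP, hPz]

theorem stmt_6 (h : ℂ) (hh : ∀ r : ℚ, h ≠ 2 * Real.pi * Complex.I * r)
    (f : MvPolynomial (Fin 2) ℂ)
    (hzero : ∀ a b : ℤ, |b| ≤ a → (2 : ℤ) ∣ (a - b) →
      MvPolynomial.eval ![qpow h ((a : ℂ) / 2), qpow h ((b : ℂ) / 2)] f = 0) :
    f = 0 := by
  set φ := MvPolynomial.finSuccEquiv ℂ 1 f with hφ
  set g : ℤ → ℂ := fun a => qpow h ((a : ℂ) / 2) with hg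
  have hginj : Function.Injective g := qpow_inj h hh
  -- for each b, the polynomial map (eval ![g b]) φ vanishes
  have hb0 : ∀ b : ℤ, φ.map (MvPolynomial.eval ![g b]) = 0 := by
    intro b
    apply Polynomial.eq_zero_of_infinite_isRoot
    have hinj : Function.Injective (fun n : ℤ => g (|b| + 2 * n)) := by
      intro m n hmn
      have := hginj hmn
      omega
    refine Set.infinite_of_injective_forall_mem (f := fun n : ℕ => g (|b| + 2 * n)) ?_ ?_
    · intro m n hmn
      have := hinj (a₁ := m) (a₂ := n) (by exact_mod_cast hmn)
      exact_mod_cast this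
    · intro n
      set a : ℤ := |b| + 2 * (n : ℤ) with ha
      have h1 : |b| ≤ a := by omega
      have h2 : (2 : ℤ) ∣ (a - b) := by
        rcases abs_cases b with ⟨hb1, _⟩ | ⟨hb1, _⟩ <;> [exact ⟨n, by omega⟩; exact ⟨-b + n, by omega⟩]
      have hz := hzero a b h1 h2
      have heval := MvPolynomial.eval_eq_eval_mv_eval' (![g b] : Fin 1 → ℂ) (g a) f
      have hfun : (Fin.cons (g a) (![g b] : Fin 1 → ℂ) : Fin 2 → ℂ) = ![g a, g b] := by
        funext i; fin_cases i <;> rfl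
      rw [hfun] at heval
      show Polynomial.eval (g a) (φ.map (MvPolynomial.eval ![g b])) = 0
      rw [← heval]
      exact hz
  -- hence all coefficients of φ vanish
  have hc : ∀ i, φ.coeff i = 0 := by
    intro i
    apply mv1_zero _ g hginj
    intro b
    have := hb0 b
    have := congrArg (fun p => Polynomial.coeff p i) this
    simpa [Polynomial.coeff_map] using this
  have hφ0 : φ = 0 := Polynomial.ext fun i => by simp [hc i]
  apply (MvPolynomial.finSuccEquiv ℂ 1).injective
  rw [map_zero, ← hφ, hφ0]
end

section
/- Let h ∈ ℂ with h ∉ 2πi·ℚ and q := exp(h). Let s ≥ 1 and let f be a polynomial in s variables over ℂ. If f(q^{a₁}, …, q^{a_s}) = 0 for every tuple (a₁, …, a_s) ∈ ℤ^s ∪ (½ + ℤ)^s with a₁ ≥ a₂ ≥ ⋯ ≥ a_s ≥ 0, then f = 0. Here q^b := exp(h·b). -/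
lemma exp_int_inj (h : ℂ) (hh : ∀ r : ℚ, h ≠ 2 * Real.pi * Complex.I * r) :
    Function.Injective fun m : ℤ => Complex.exp (h * m) := by
  intro m n hmn
  by_contra hne
  simp only [Complex.exp_eq_exp_iff_exists_int] at hmn
  obtain ⟨k, hk⟩ := hmn
  have hsub : h * ((m : ℂ) - n) = (k : ℂ) * (2 * Real.pi * Complex.I) := by ring_nf; ring_nf at hk; linear_combination hk
  have hmn' : (m : ℂ) - n ≠ 0 := by
    intro hc
    apply hne
    exact_mod_cast sub_eq_zero.mp hc
  apply hh ((k : ℚ) / ((m : ℚ) - n))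
  push_cast
  field_simp at hsub ⊢
  linear_combination hsub

lemma key (h : ℂ) (hinj : Function.Injective fun m : ℤ => Complex.exp (h * m)) :
    ∀ n (g : MvPolynomial (Fin n) ℂ),
      (∀ a : Fin n → ℤ, (∀ i j, i ≤ j → a j ≤ a i) → (∀ i, 0 ≤ a i) →
        MvPolynomial.eval (fun i => Complex.exp (h * a i)) g = 0) → g = 0 := by
  intro n
  induction n with
  | zero =>
      intro g hg
      rw [MvPolynomial.eq_C_of_isEmpty g]
      have := hg (fun i => 0) (fun i j _ => le_rfl) (fun i => le_rfl)
      rw [MvPolynomial.eq_C_of_isEmpty g] at this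
      simpa using this
  | succ n ih =>
      intro g hg
      have hp : MvPolynomial.finSuccEquiv ℂ n g = 0 := by
        apply Polynomial.ext
        intro k
        rw [Polynomial.coeff_zero]
        apply ih
        intro a ha h0
        set N : ℤ := ((Finset.univ.sup fun i => (a i).toNat : ℕ) : ℤ) with hN
        have hNa : ∀ i, a i ≤ N := fun i =>
          le_trans (Int.self_le_toNat _) (by rw [hN]; exact_mod_cast Finset.le_sup (f := fun i => (a i).toNat) (Finset.mem_univ i))
        have hN0 : (0 : ℤ) ≤ N := Int.ofNat_nonneg _
        set P : Polynomial ℂ :=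
          Polynomial.map (MvPolynomial.eval fun i => Complex.exp (h * a i))
            (MvPolynomial.finSuccEquiv ℂ n g) with hPdef
        have hP : P = 0 := by
          apply Polynomial.eq_zero_of_infinite_isRoot
          apply Set.Infinite.mono
            (s := (fun m : ℤ => Complex.exp (h * m)) '' Set.Ici N)
          · rintro x ⟨m, hm, rfl⟩
            have hb : MvPolynomial.eval
                (Fin.cons (Complex.exp (h * m)) (fun i => Complex.exp (h * a i))) g = 0 := by
              have := hg (Fin.cons m a) ?_ ?_
              · have harg : (Fin.cons (Complex.exp (h * m)) fun i => Complex.exp (h * a i))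
                    = fun i => Complex.exp (h * ((Fin.cons m a : Fin (n+1) → ℤ) i : ℂ)) := by
                  funext i
                  refine Fin.cases ?_ (fun i => ?_) i <;> simp
                rw [harg]
                exact this
              · intro i j hij
                refine Fin.cases (fun j hij => ?_) (fun i j hij => ?_) i j hij
                · refine Fin.cases ?_ (fun j => ?_) j <;> simp
                  exact le_trans (hNa j) hm
                · refine Fin.cases (fun hij => ?_) (fun j hij => ?_) j hij
                  · exact absurd hij (by simp [Fin.le_def])
                  · simpa using ha i j (by simpa [Fin.succ_le_succ_iff] using hij)
              · intro i
                refine Fin.cases ?_ (fun i => ?_) i <;> simp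
                exacts [le_trans hN0 hm, h0 i]
            rw [MvPolynomial.eval_eq_eval_mv_eval'] at hb
            exact hb
          · exact Set.Infinite.image (Set.injOn_of_injective hinj)
              (Set.Ici_infinite N)
        have : P.coeff k = 0 := by rw [hP, Polynomial.coeff_zero]
        rwa [hPdef, Polynomial.coeff_map] at this
      exact (MvPolynomial.finSuccEquiv ℂ n).injective (by simpa using hp)

theorem stmt_7 (h : ℂ) (hh : ∀ r : ℚ, h ≠ 2 * Real.pi * Complex.I * r)
    (s : ℕ) (hs : 1 ≤ s) (f : MvPolynomial (Fin s) ℂ)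
    (hzero : ∀ (ε : ℚ), (ε = 0 ∨ ε = 1/2) → ∀ a : Fin s → ℤ,
      (∀ i j : Fin s, i ≤ j → a j ≤ a i) → (∀ i : Fin s, 0 ≤ a i) →
      MvPolynomial.eval (fun i => qpow h ((a i : ℂ) + (ε : ℂ))) f = 0) :
    f = 0 := by
  apply key h (exp_int_inj h hh) s f
  intro a ha h0
  have := hzero 0 (Or.inl rfl) a ha h0
  simpa [qpow] using this
end

section
/- Let h ∈ ℂ with h ∉ 2πi·ℚ, q := exp(h), and let ℓ, m₀ ∈ ℂ satisfy q^{2(m₀+k)} ≠ −1 for all k ∈ ℤ. Let V = ⊕_{k∈ℤ} ℂ·e_k and define ℂ-linear endomorphisms I₂₁, I₃₂ of V by I₂₁ e_k = i·[m₀+k]·e_k and I₃₂ e_k = a_k·e_{k+1} − e_{k−1}, where a_k := [ℓ+m₀+k+1]·[ℓ−m₀−k] / ((q^{m₀+k}+q^{−(m₀+k)})·(q^{m₀+k+1}+q^{−(m₀+k+1)})). Then I₂₁ and I₃₂ satisfy the defining relations of U_q^{tw}(so₃): I₃₂²I₂₁ − [2]·I₃₂I₂₁I₃₂ + I₂₁I₃₂²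 = −I₂₁ and I₂₁²I₃₂ − [2]·I₂₁I₃₂I₂₁ + I₃₂I₂₁² = −I₃₂ (as endomorphisms of V). Hence V carries a U_q^{tw}(so₃)-module structure, the generic Gelfand–Tsetlin representation V^ℓ_{m₀}. -/
/-- The rationalized Gelfand–Tsetlin coefficient
`a_k = [ℓ+m₀+k+1][ℓ−m₀−k]/((q^{m₀+k}+q^{−(m₀+k)})(q^{m₀+k+1}+q^{−(m₀+k+1)}))`. -/
noncomputable def gtA (h ℓ m₀ : ℂ) (k : ℤ) : ℂ :=
  qnum h (ℓ + m₀ + k + 1) * qnum h (ℓ - m₀ - k) /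
    ((qpow h (m₀ + k) + qpow h (-(m₀ + k))) *
      (qpow h (m₀ + k + 1) + qpow h (-(m₀ + k + 1))))

/-!
On the basis `e_k`, `I₂₁` is diagonal and `I₃₂` is tridiagonal, so each relation applied to `e_k`
amounts to a few scalar identities between neighbouring coefficients. For the diagonal entries
`i[m₀+k]` these are the recurrence `[b+1] + [b-1] = [2][b]` and `[b]² - [b+1][b-1] = 1`. The one
identity that involves the `a_k` reduces, through `[b+1] - [b-1] = q^b + q^{-b}`, to
`[ℓ+m][ℓ-m+1] - [ℓ+m+1][ℓ-m] = [2m] = [m](q^m + q^{-m})`.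
-/

def TwistedQSerre {R A : Type*} [Ring A] [SMul R A] (s : R) (x y : A) : Prop :=
  y * y * x - s • (y * x * y) + x * (y * y) = -x

section Tridiagonal

open Finsupp

variable {R : Type*} [CommRing R] {d a c : ℤ → R} {D T : Module.End R (ℤ →₀ R)}

theorem twistedQSerre_diagonal_tridiagonal (s : R)
    (hD : ∀ k, D (single k 1) = d k • single k 1)
    (hT : ∀ k, T (single k 1) = a k • single (k + 1) 1 + c k • single (k - 1) 1)
    (hrec : ∀ k, d (k - 1) + d (k + 1) = s * d k)
    (hmid : ∀ k, 2 * d k * (a k * c (k + 1) + c k * a (k - 1))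
      - s * (a k * c (k + 1) * d (k + 1) + c k * a (k - 1) * d (k - 1)) = -d k) :
    TwistedQSerre s D T := by
  refine Finsupp.basisSingleOne.ext fun k => ?_
  simp only [coe_basisSingleOne, LinearMap.sub_apply, LinearMap.add_apply, LinearMap.smul_apply,
    Module.End.mul_apply, LinearMap.neg_apply, hD, hT, map_smul, map_add, smul_add, smul_smul,
    add_sub_cancel_right, sub_add_cancel]
  have hup := hrec (k + 1)
  have hdown := hrec (k - 1)
  simp only [add_sub_cancel_right, sub_add_cancel] at hup hdown
  match_scalars
  · linear_combination a k * a (k + 1) * hup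
  · linear_combination hmid k
  · linear_combination c k * c (k - 1) * hdown

theorem twistedQSerre_tridiagonal_diagonal (s : R)
    (hD : ∀ k, D (single k 1) = d k • single k 1)
    (hT : ∀ k, T (single k 1) = a k • single (k + 1) 1 + c k • single (k - 1) 1)
    (hsq : ∀ k, d k ^ 2 - s * d k * d (k + 1) + d (k + 1) ^ 2 = -1) :
    TwistedQSerre s T D := by
  refine Finsupp.basisSingleOne.ext fun k => ?_
  simp only [coe_basisSingleOne, LinearMap.sub_apply, LinearMap.add_apply, LinearMap.smul_apply,
    Module.End.mul_apply, LinearMap.neg_apply, hD, hT, map_smul, map_add, smul_add, smul_smul]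
  have hdown := hsq (k - 1)
  simp only [sub_add_cancel] at hdown
  match_scalars
  · linear_combination a k * hsq k
  · linear_combination c k * hdown

end Tridiagonal

section QNumbers

open Complex

theorem qnum_eq_div (h b : ℂ) :
    qnum h b = (exp (h * b) ^ 2 - 1) * exp h / (exp (h * b) * (exp h ^ 2 - 1)) := by
  have sub_inv (z : ℂ) (hz : z ≠ 0) : z - z⁻¹ = (z ^ 2 - 1) / z := by field_simp
  rw [qnum, exp_neg, exp_neg, sub_inv _ (exp_ne_zero _), sub_inv _ (exp_ne_zero _),
    div_div_div_eq]

theorem qnum_add_one_add_qnum_sub_one (h b : ℂ) :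
    qnum h (b + 1) + qnum h (b - 1) = qnum h 2 * qnum h b := by
  simp only [qnum_eq_div, mul_add, mul_sub, mul_one, exp_add, exp_sub,
    show h * 2 = h + h by ring]
  by_cases hq : exp h ^ 2 = 1
  · simp [hq]
  · have := sub_ne_zero.2 hq
    field_simp
    ring

theorem qnum_add_one_sub_qnum_sub_one {h : ℂ} (hq : exp h ^ 2 ≠ 1) (b : ℂ) :
    qnum h (b + 1) - qnum h (b - 1) = qpow h b + qpow h (-b) := by
  simp only [qnum_eq_div, qpow, mul_add, mul_sub, mul_one, mul_neg, exp_add, exp_sub, exp_neg]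
  have := sub_ne_zero.2 hq
  field_simp
  ring

theorem qnum_mul_qpow_add_qpow_neg (h b : ℂ) :
    qnum h b * (qpow h b + qpow h (-b)) = qnum h (2 * b) := by
  simp only [qnum_eq_div, qpow, mul_neg, exp_neg, show h * (2 * b) = h * b + h * b by ring,
    exp_add]
  by_cases hq : exp h ^ 2 = 1
  · simp [hq]
  · have := sub_ne_zero.2 hq
    field_simp
    ring

theorem qnum_mul_qnum_sub_qnum_add_one_mul {h : ℂ} (hq : exp h ^ 2 ≠ 1) (x y : ℂ) :
    qnum h x * qnum h y - qnum h (x + 1) * qnum h (y - 1) = qnum h (x - y + 1) := by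
  simp only [qnum_eq_div, mul_add, mul_sub, mul_one, exp_add, exp_sub]
  have := sub_ne_zero.2 hq
  field_simp
  ring

theorem qnum_one {h : ℂ} (hq : exp h ^ 2 ≠ 1) : qnum h 1 = 1 := by
  have := sub_ne_zero.2 hq
  rw [qnum_eq_div, mul_one]
  field_simp

theorem qnum_sq_sub_mul_add_sq {h : ℂ} (hq : exp h ^ 2 ≠ 1) (b : ℂ) :
    qnum h b ^ 2 - qnum h 2 * qnum h b * qnum h (b + 1) + qnum h (b + 1) ^ 2 = 1 := by
  have hcas := qnum_mul_qnum_sub_qnum_add_one_mul hq b b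
  rw [sub_self, zero_add, qnum_one hq] at hcas
  linear_combination hcas + qnum h (b + 1) * qnum_add_one_add_qnum_sub_one h b

theorem exp_sq_ne_one_of_ne_two_pi_I_mul_rat {h : ℂ} (hh : ∀ r : ℚ, h ≠ 2 * Real.pi * I * r) :
    exp h ^ 2 ≠ 1 := by
  rw [← exp_nat_mul, ne_eq, exp_eq_one_iff]
  rintro ⟨n, hn⟩
  apply hh (n / 2)
  push_cast
  linear_combination hn / 2

theorem qpow_add_qpow_neg_ne_zero {h b : ℂ} (hb : qpow h (2 * b) ≠ -1) :
    qpow h b + qpow h (-b) ≠ 0 := by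
  rw [qpow, show h * (2 * b) = h * b + h * b by ring, exp_add] at hb
  rw [qpow, qpow, mul_neg, exp_neg]
  intro h0
  apply hb
  field_simp at h0
  linear_combination h0

noncomputable def gtCoeff (h ℓ m : ℂ) : ℂ :=
  qnum h (ℓ + m + 1) * qnum h (ℓ - m) /
    ((qpow h m + qpow h (-m)) * (qpow h (m + 1) + qpow h (-(m + 1))))

theorem gtA_eq_gtCoeff (h ℓ m₀ : ℂ) (k : ℤ) : gtA h ℓ m₀ k = gtCoeff h ℓ (m₀ + k) := by
  rw [gtA, gtCoeff, add_assoc ℓ, sub_sub]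

theorem gtCoeff_mul_add_gtCoeff_sub_one_mul {h ℓ m : ℂ} (hq : exp h ^ 2 ≠ 1)
    (hpred : qpow h (m - 1) + qpow h (-(m - 1)) ≠ 0) (hm : qpow h m + qpow h (-m) ≠ 0)
    (hsucc : qpow h (m + 1) + qpow h (-(m + 1)) ≠ 0) :
    gtCoeff h ℓ m * (2 * qnum h m - qnum h 2 * qnum h (m + 1)) +
      gtCoeff h ℓ (m - 1) * (2 * qnum h m - qnum h 2 * qnum h (m - 1)) = qnum h m := by
  have rec_succ := qnum_add_one_add_qnum_sub_one h (m + 1)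
  have rec_pred := qnum_add_one_add_qnum_sub_one h (m - 1)
  have dif_succ := qnum_add_one_sub_qnum_sub_one hq (m + 1)
  have dif_pred := qnum_add_one_sub_qnum_sub_one hq (m - 1)
  simp only [add_sub_cancel_right, sub_add_cancel] at rec_succ rec_pred dif_succ dif_pred
  have cas := qnum_mul_qnum_sub_qnum_add_one_mul hq (ℓ + m) (ℓ - m + 1)
  rw [add_sub_cancel_right, show ℓ + m - (ℓ - m + 1) + 1 = 2 * m by ring,
    ← qnum_mul_qpow_add_qpow_neg] at cas
  rw [show 2 * qnum h m - qnum h 2 * qnum h (m + 1) = -(qpow h (m + 1) + qpow h (-(m + 1))) by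
      linear_combination rec_succ - dif_succ,
    show 2 * qnum h m - qnum h 2 * qnum h (m - 1) = qpow h (m - 1) + qpow h (-(m - 1)) by
      linear_combination rec_pred + dif_pred,
    gtCoeff, gtCoeff, sub_add_cancel, show ℓ + (m - 1) + 1 = ℓ + m by ring,
    show ℓ - (m - 1) = ℓ - m + 1 by ring]
  field_simp
  linear_combination cas

end QNumbers

theorem stmt_8 (h : ℂ) (hh : ∀ r : ℚ, h ≠ 2 * Real.pi * Complex.I * r)
    (ℓ m₀ : ℂ) (hm : ∀ k : ℤ, qpow h (2 * (m₀ + k)) ≠ -1)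
    (I21 I32 : Module.End ℂ (ℤ →₀ ℂ))
    (hI21 : ∀ k : ℤ, I21 (Finsupp.single k 1) =
      (Complex.I * qnum h (m₀ + k)) • Finsupp.single k 1)
    (hI32 : ∀ k : ℤ, I32 (Finsupp.single k 1) =
      gtA h ℓ m₀ k • Finsupp.single (k + 1) 1 - Finsupp.single (k - 1) 1) :
    I32 * I32 * I21 - qnum h 2 • (I32 * I21 * I32) + I21 * (I32 * I32) = -I21 ∧
    I21 * I21 * I32 - qnum h 2 • (I21 * I32 * I21) + I32 * (I21 * I21) = -I32 := by
  have hq := exp_sq_ne_one_of_ne_two_pi_I_mul_rat hh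
  have hcosh (j : ℤ) : qpow h (m₀ + j) + qpow h (-(m₀ + j)) ≠ 0 :=
    qpow_add_qpow_neg_ne_zero (hm j)
  have hI32' (k : ℤ) : I32 (Finsupp.single k 1) =
      gtA h ℓ m₀ k • Finsupp.single (k + 1) 1 + (-1 : ℂ) • Finsupp.single (k - 1) 1 := by
    rw [hI32, neg_one_smul, sub_eq_add_neg]
  refine ⟨twistedQSerre_diagonal_tridiagonal _ hI21 hI32' (fun k => ?_) (fun k => ?_),
    twistedQSerre_tridiagonal_diagonal _ hI21 hI32' (fun k => ?_)⟩
  · push_cast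
    simp only [← add_assoc, ← add_sub_assoc]
    linear_combination Complex.I * qnum_add_one_add_qnum_sub_one h (m₀ + k)
  · have hpred := hcosh (k - 1)
    have hsucc := hcosh (k + 1)
    rw [gtA_eq_gtCoeff, gtA_eq_gtCoeff]
    push_cast at hpred hsucc ⊢
    simp only [← add_assoc, ← add_sub_assoc] at hpred hsucc ⊢
    linear_combination -Complex.I * gtCoeff_mul_add_gtCoeff_sub_one_mul hq hpred (hcosh k) hsucc
  · push_cast
    simp only [← add_assoc]
    linear_combination Complex.I ^ 2 * qnum_sq_sub_mul_add_sq hq (m₀ + k) + Complex.I_sq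
end

section
/- Let h ∈ ℂ with h ∉ 2πi·ℚ and q := exp(h). Let A be the quotient of the free ℂ-algebra on two generators x₁, x₂ by the two-sided ideal generated by x₂²x₁ − [2]x₂x₁x₂ + x₁x₂² + x₁ and x₁²x₂ − [2]x₁x₂x₁ + x₂x₁² + x₂ (so A ≅ U_q^{tw}(so₃) with x₁ = I₂₁, x₂ = I₃₂). Set y := x₁x₂ − q·x₂x₁ in A. Then the element C_q := −x₁² − q^{−1}y² − q²x₂² − (q − q^{−1})x₁x₂y is central in A; equivalently, C_q commutes with both x₁ and x₂. -/
open FreeAlgebra in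
/-- The defining relations of `U_q^tw(so₃)` on the free algebra on two generators
`x₁ = ι 0 (= I₂₁)` and `x₂ = ι 1 (= I₃₂)`. -/
inductive so3Rel (h : ℂ) : FreeAlgebra ℂ (Fin 2) → FreeAlgebra ℂ (Fin 2) → Prop
  | rel1 : so3Rel h
      (ι ℂ 1 * ι ℂ 1 * ι ℂ 0 - qnum h 2 • (ι ℂ 1 * ι ℂ 0 * ι ℂ 1) + ι ℂ 0 * (ι ℂ 1 * ι ℂ 1))
      (-ι ℂ 0)
  | rel2 : so3Rel h
      (ι ℂ 0 * ι ℂ 0 * ι ℂ 1 - qnum h 2 • (ι ℂ 0 * ι ℂ 1 * ι ℂ 0) + ι ℂ 1 * (ι ℂ 0 * ι ℂ 0))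
      (-ι ℂ 1)

/-!
Let `y = x₁x₂ - q x₂x₁`. Up to a factor `-q`, the two cubic relations say exactly
`x₂ y = q y x₂ + q x₁` and `y x₁ = q x₁ y + q x₂`; together with `x₂ x₁ = q⁻¹ (x₁x₂ - y)`
these rewrite every word into the normal form `x₁ⁱ yʲ x₂ᵏ`. Normal-ordering `C_q x₁` and `x₁ C_q`
(and likewise for `x₂`) gives the same result, and an element commuting with the generators
is central.
-/

theorem FreeAlgebra.commute_of_commute_ι {R X A : Type*} [CommSemiring R] [Semiring A]
    [Algebra R A] (f : FreeAlgebra R X →ₐ[R] A) (hf : Function.Surjective f) {c : A}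
    (hc : ∀ x, Commute c (f (ι R x))) (a : A) : Commute c a := by
  obtain ⟨p, rfl⟩ := hf a
  induction p using FreeAlgebra.induction with
  | grade0 r => simpa only [AlgHom.commutes] using Algebra.commute_algebraMap_right r c
  | grade1 x => exact hc x
  | mul p₁ p₂ ih₁ ih₂ => simpa only [map_mul] using ih₁.mul_right ih₂
  | add p₁ p₂ ih₁ ih₂ => simpa only [map_add] using ih₁.add_right ih₂

theorem exp_sub_exp_neg_ne_zero {h : ℂ} (hh : ∀ r : ℚ, h ≠ 2 * Real.pi * Complex.I * r) :
    Complex.exp h - Complex.exp (-h) ≠ 0 := by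
  intro hzero
  obtain ⟨n, hn⟩ : ∃ n : ℤ, h + h = n * (2 * Real.pi * Complex.I) := by
    rw [← Complex.exp_eq_one_iff, Complex.exp_add]
    nth_rw 2 [sub_eq_zero.1 hzero]
    rw [← Complex.exp_add, add_neg_cancel, Complex.exp_zero]
  apply hh (n / 2)
  push_cast
  linear_combination hn / 2

theorem qnum_two {h : ℂ} (hh : ∀ r : ℚ, h ≠ 2 * Real.pi * Complex.I * r) :
    qnum h 2 = Complex.exp h + (Complex.exp h)⁻¹ := by
  rw [qnum, div_eq_iff (exp_sub_exp_neg_ne_zero hh), mul_two, Complex.exp_neg, Complex.exp_neg,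
    Complex.exp_add]
  field_simp
  ring

section TwistedSO3

variable {K A : Type*} [Field K] [Ring A] [Algebra K A]

def qCommutator (q : K) (a b : A) : A := a * b - q • (b * a)

def so3Casimir (q : K) (x₁ x₂ : A) : A :=
  -(x₁ * x₁) - q⁻¹ • (qCommutator q x₁ x₂ * qCommutator q x₁ x₂) - q ^ 2 • (x₂ * x₂)
    - (q - q⁻¹) • (x₁ * x₂ * qCommutator q x₁ x₂)

structure IsTwistedSO3Pair (q : K) (x₁ x₂ : A) : Prop where
  rel₁ : x₂ * x₂ * x₁ - (q + q⁻¹) • (x₂ * x₁ * x₂) + x₁ * (x₂ * x₂) = -x₁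
  rel₂ : x₁ * x₁ * x₂ - (q + q⁻¹) • (x₁ * x₂ * x₁) + x₂ * (x₁ * x₁) = -x₂

variable {q : K} {x₁ x₂ : A}

theorem mul_eq_sub_qCommutator (hq : q ≠ 0) :
    x₂ * x₁ = q⁻¹ • (x₁ * x₂) - q⁻¹ • qCommutator q x₁ x₂ := by
  rw [qCommutator]
  match_scalars <;> field_simp; ring

private theorem mul_mul_of_mul_eq {a b c : A} (h : a * b = c) (z : A) : a * (b * z) = c * z := by
  rw [← mul_assoc, h]

namespace IsTwistedSO3Pair

theorem mul_qCommutator (H : IsTwistedSO3Pair q x₁ x₂) (hq : q ≠ 0) :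
    x₂ * qCommutator q x₁ x₂ = q • (qCommutator q x₁ x₂ * x₂) + q • x₁ := by
  rw [← sub_eq_zero]
  calc _ = (-q) • ((x₂ * x₂ * x₁ - (q + q⁻¹) • (x₂ * x₁ * x₂) + x₁ * (x₂ * x₂)) - (-x₁)) := by
        rw [qCommutator]
        simp only [mul_sub, sub_mul, mul_smul_comm, smul_mul_assoc, mul_assoc]
        match_scalars <;> field_simp; ring
    _ = 0 := by rw [H.rel₁, sub_self, smul_zero]

theorem qCommutator_mul (H : IsTwistedSO3Pair q x₁ x₂) (hq : q ≠ 0) :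
    qCommutator q x₁ x₂ * x₁ = q • (x₁ * qCommutator q x₁ x₂) + q • x₂ := by
  rw [← sub_eq_zero]
  calc _ = (-q) • ((x₁ * x₁ * x₂ - (q + q⁻¹) • (x₁ * x₂ * x₁) + x₂ * (x₁ * x₁)) - (-x₂)) := by
        rw [qCommutator]
        simp only [mul_sub, sub_mul, mul_smul_comm, smul_mul_assoc, mul_assoc]
        match_scalars <;> field_simp; ring
    _ = 0 := by rw [H.rel₂, sub_self, smul_zero]

theorem commute_so3Casimir (H : IsTwistedSO3Pair q x₁ x₂) (hq : q ≠ 0) :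
    Commute (so3Casimir q x₁ x₂) x₁ ∧ Commute (so3Casimir q x₁ x₂) x₂ := by
  have r₁ := mul_eq_sub_qCommutator (x₁ := x₁) (x₂ := x₂) hq
  have r₂ := H.mul_qCommutator hq
  have r₃ := H.qCommutator_mul hq
  have neg_eq (z : A) : -z = (-1 : K) • z := (neg_one_smul K z).symm
  constructor <;>
  · simp only [Commute, SemiconjBy, so3Casimir, neg_eq, mul_add, add_mul, mul_sub,
      sub_mul, smul_mul_assoc, mul_smul_comm, smul_add, smul_sub, smul_smul, mul_assoc,
      r₁, r₂, r₃, mul_mul_of_mul_eq r₁, mul_mul_of_mul_eq r₂, mul_mul_of_mul_eq r₃]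
    match_scalars <;> field_simp <;> ring

end IsTwistedSO3Pair

end TwistedSO3

theorem isTwistedSO3Pair_so3Rel {h : ℂ} (hh : ∀ r : ℚ, h ≠ 2 * Real.pi * Complex.I * r) :
    IsTwistedSO3Pair (Complex.exp h) (RingQuot.mkAlgHom ℂ (so3Rel h) (FreeAlgebra.ι ℂ 0))
      (RingQuot.mkAlgHom ℂ (so3Rel h) (FreeAlgebra.ι ℂ 1)) := by
  constructor
  · simpa only [map_sub, map_add, map_mul, map_smul, map_neg, qnum_two hh] using
      RingQuot.mkAlgHom_rel ℂ (so3Rel.rel1 (h := h))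
  · simpa only [map_sub, map_add, map_mul, map_smul, map_neg, qnum_two hh] using
      RingQuot.mkAlgHom_rel ℂ (so3Rel.rel2 (h := h))

theorem stmt_11 (h : ℂ) (hh : ∀ r : ℚ, h ≠ 2 * Real.pi * Complex.I * r) :
    ∀ (x₁ x₂ y Cq : RingQuot (so3Rel h)),
      x₁ = RingQuot.mkAlgHom ℂ (so3Rel h) (FreeAlgebra.ι ℂ 0) →
      x₂ = RingQuot.mkAlgHom ℂ (so3Rel h) (FreeAlgebra.ι ℂ 1) →
      y = x₁ * x₂ - Complex.exp h • (x₂ * x₁) →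
      Cq = -(x₁ * x₁) - (Complex.exp h)⁻¹ • (y * y) - (Complex.exp h) ^ 2 • (x₂ * x₂)
            - (Complex.exp h - (Complex.exp h)⁻¹) • (x₁ * x₂ * y) →
      ∀ a : RingQuot (so3Rel h), Cq * a = a * Cq := by
  rintro x₁ x₂ y Cq rfl rfl rfl rfl a
  have hcomm := (isTwistedSO3Pair_so3Rel hh).commute_so3Casimir (Complex.exp_ne_zero h)
  exact (FreeAlgebra.commute_of_commute_ι _ (RingQuot.mkAlgHom_surjective ℂ (so3Rel h))
    (Fin.forall_fin_two.2 hcomm) a).eq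
end

section
/- Let h ∈ ℂ with h ∉ 2πi·ℚ and q := exp(h). For ℓ = 1 and m₀ = 0, the generic Gelfand–Tsetlin representation V^{1}_{0} of U_q^{tw}(so₃) has length exactly 3; explicitly, setting W₁ := span{e_k : k ≤ −2} and W₂ := span{e_k : k ≤ 1}, both W₁ and W₂ are invariant under I₂₁ and I₃₂, the chain 0 ⊊ W₁ ⊊ W₂ ⊊ V is strictly increasing, and each of W₁, W₂/W₁, and V/W₂ is an irreducible module (i.e., has no proper nonzero invariant subspace). -/
section
variable {h : ℂ}

lemma exp_int_eq_one (hh : ∀ r : ℚ, h ≠ 2 * Real.pi * Complex.I * r)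
    {n : ℤ} (he : Complex.exp (h * n) = 1) : n = 0 := by
  by_contra hn
  rw [Complex.exp_eq_one_iff] at he
  obtain ⟨m, hm⟩ := he
  apply hh ((m : ℚ) / (n : ℚ))
  have hn' : (n : ℂ) ≠ 0 := Int.cast_ne_zero.mpr hn
  have hn'' : (n : ℚ) ≠ 0 := Int.cast_ne_zero.mpr hn
  push_cast
  field_simp
  linear_combination hm

lemma denom_ne_zero (hh : ∀ r : ℚ, h ≠ 2 * Real.pi * Complex.I * r) :
    Complex.exp h - Complex.exp (-h) ≠ 0 := by
  rw [sub_ne_zero]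
  intro he
  have h2 : Complex.exp (h * ((2:ℤ):ℂ)) = 1 := by
    rw [show h * ((2:ℤ):ℂ) = h + h by push_cast; ring, Complex.exp_add]
    nth_rewrite 1 [he]
    rw [← Complex.exp_add]
    simp
  have := exp_int_eq_one hh h2
  omega

lemma qnum_int_ne_zero (hh : ∀ r : ℚ, h ≠ 2 * Real.pi * Complex.I * r)
    {n : ℤ} (hn : n ≠ 0) : qnum h (n : ℂ) ≠ 0 := by
  apply div_ne_zero _ (denom_ne_zero hh)
  rw [sub_ne_zero]
  intro he
  have h2 : Complex.exp (h * ((2*n:ℤ):ℂ)) = 1 := by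
    rw [show h * ((2*n:ℤ):ℂ) = h * n + h * n by push_cast; ring, Complex.exp_add]
    nth_rewrite 1 [he]
    rw [← Complex.exp_add]
    simp
  have := exp_int_eq_one hh h2
  omega

lemma qnum_zero : qnum h 0 = 0 := by simp [qnum]

lemma qsum_ne_zero (hh : ∀ r : ℚ, h ≠ 2 * Real.pi * Complex.I * r)
    (n : ℤ) : qpow h (n:ℂ) + qpow h (-(n:ℂ)) ≠ 0 := by
  intro he
  rw [qpow, qpow, add_eq_zero_iff_eq_neg] at he
  have h2 : Complex.exp (h * ((2*n:ℤ):ℂ)) = -1 := by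
    rw [show h * ((2*n:ℤ):ℂ) = h * n - h * (-(n:ℂ)) by push_cast; ring, Complex.exp_sub, he]
    rw [neg_div, div_self (Complex.exp_ne_zero _)]
  have h4 : Complex.exp (h * ((4*n:ℤ):ℂ)) = 1 := by
    rw [show h * ((4*n:ℤ):ℂ) = h * ((2*n:ℤ):ℂ) + h * ((2*n:ℤ):ℂ) by push_cast; ring,
      Complex.exp_add, h2]
    ring
  have hn0 := exp_int_eq_one hh h4
  have hn : n = 0 := by omega
  subst hn
  norm_num at h2

lemma qnum_int_inj (hh : ∀ r : ℚ, h ≠ 2 * Real.pi * Complex.I * r)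
    {k j : ℤ} (he : qnum h (k:ℂ) = qnum h (j:ℂ)) : k = j := by
  rw [qnum, qnum, div_eq_div_iff (denom_ne_zero hh) (denom_ne_zero hh)] at he
  have he' : Complex.exp (h*k) - Complex.exp (-(h*k))
      = Complex.exp (h*j) - Complex.exp (-(h*j)) := mul_right_cancel₀ (denom_ne_zero hh) he
  rw [Complex.exp_neg, Complex.exp_neg] at he'
  have hx0 : Complex.exp (h*k) ≠ 0 := Complex.exp_ne_zero _
  have hy0 : Complex.exp (h*j) ≠ 0 := Complex.exp_ne_zero _
  have key : (Complex.exp (h*k) - Complex.exp (h*j))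
      * (Complex.exp (h*k) * Complex.exp (h*j) + 1) = 0 := by
    field_simp at he'
    linear_combination he'
  rcases mul_eq_zero.mp key with hxy | hxy
  · have h1 : Complex.exp (h * ((k - j : ℤ):ℂ)) = 1 := by
      rw [show h * ((k-j:ℤ):ℂ) = h * k - h * j by push_cast; ring, Complex.exp_sub,
        sub_eq_zero.mp hxy]
      exact div_self hy0
    have := exp_int_eq_one hh h1
    omega
  · exfalso
    have hsum : Complex.exp (h * ((k + j : ℤ):ℂ)) = -1 := by
      rw [show h * ((k+j:ℤ):ℂ) = h * k + h * j by push_cast; ring, Complex.exp_add]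
      linear_combination hxy
    have h4 : Complex.exp (h * ((2*(k+j):ℤ):ℂ)) = 1 := by
      rw [show h * ((2*(k+j):ℤ):ℂ) = h * ((k+j:ℤ):ℂ) + h * ((k+j:ℤ):ℂ) by push_cast; ring,
        Complex.exp_add, hsum]
      ring
    have h0 := exp_int_eq_one hh h4
    have : k + j = 0 := by omega
    rw [this] at hsum
    norm_num at hsum
end

section
variable {h : ℂ}

lemma gtA_neg_two : gtA h 1 0 (-2) = 0 := by
  have : (1 + 0 + ((-2:ℤ):ℂ) + 1) = 0 := by push_cast; ring
  rw [gtA, this, qnum_zero, zero_mul, zero_div]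

lemma gtA_one : gtA h 1 0 1 = 0 := by
  have : (1 - 0 - ((1:ℤ):ℂ)) = 0 := by push_cast; ring
  rw [gtA, this, qnum_zero, mul_zero, zero_div]

lemma gtA_ne_zero (hh : ∀ r : ℚ, h ≠ 2 * Real.pi * Complex.I * r)
    {k : ℤ} (h2 : k ≠ -2) (h1 : k ≠ 1) : gtA h 1 0 k ≠ 0 := by
  rw [gtA]
  have e1 : (1 + 0 + (k:ℂ) + 1) = ((k+2 : ℤ):ℂ) := by push_cast; ring
  have e2 : (1 - 0 - (k:ℂ)) = ((1-k : ℤ):ℂ) := by push_cast; ring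
  have e3 : ((0:ℂ) + (k:ℂ)) = ((k:ℤ):ℂ) := by ring
  have e4 : ((0:ℂ) + (k:ℂ) + 1) = ((k+1:ℤ):ℂ) := by push_cast; ring
  rw [e1, e2, e4, e3]
  exact div_ne_zero
    (mul_ne_zero (qnum_int_ne_zero hh (by omega)) (qnum_int_ne_zero hh (by omega)))
    (mul_ne_zero (qsum_ne_zero hh k) (qsum_ne_zero hh (k+1)))

end

section
variable {h : ℂ} {I21 I32 : Module.End ℂ (ℤ →₀ ℂ)}

/-- abbreviation for the eigenvalue of `I21` on `e k`. -/
noncomputable def lam (h : ℂ) (k : ℤ) : ℂ := Complex.I * qnum h ((0 : ℂ) + k)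

lemma lam_inj (hh : ∀ r : ℚ, h ≠ 2 * Real.pi * Complex.I * r)
    {k j : ℤ} (he : lam h k = lam h j) : k = j := by
  rw [lam, lam, zero_add, zero_add] at he
  exact qnum_int_inj hh (mul_left_cancel₀ Complex.I_ne_zero he)

lemma single_eq_smul (k : ℤ) (c : ℂ) : Finsupp.single k c = c • Finsupp.single k 1 := by
  rw [Finsupp.smul_single', mul_one]

lemma I21_coord (hI21 : ∀ k : ℤ, I21 (Finsupp.single k 1) =
      (Complex.I * qnum h ((0 : ℂ) + k)) • Finsupp.single k 1)
    (v : ℤ →₀ ℂ) (k : ℤ) : I21 v k = lam h k * v k := by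
  conv_lhs => rw [← Finsupp.sum_single v, map_finsuppSum]
  rw [Finsupp.sum_apply, Finsupp.sum]
  by_cases hk : k ∈ v.support
  · rw [Finset.sum_eq_single_of_mem k hk]
    · rw [single_eq_smul, map_smul, hI21 k]
      simp [lam, mul_comm]
    · intro m _ hmk
      rw [single_eq_smul, map_smul, hI21 m]
      simp [Finsupp.single_apply, hmk]
  · rw [Finsupp.notMem_support_iff] at hk
    rw [hk, mul_zero]
    apply Finset.sum_eq_zero
    intro m hm
    rw [single_eq_smul, map_smul, hI21 m]
    have hmk : m ≠ k := by
      rintro rfl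
      rw [Finsupp.mem_support_iff] at hm
      exact hm hk
    simp [Finsupp.single_apply, hmk]

/-- component extraction: an `I21`-invariant subspace contains all basis
components of its elements. -/
lemma extract (hh : ∀ r : ℚ, h ≠ 2 * Real.pi * Complex.I * r)
    (hI21 : ∀ k : ℤ, I21 (Finsupp.single k 1) =
      (Complex.I * qnum h ((0 : ℂ) + k)) • Finsupp.single k 1)
    (U : Submodule ℂ (ℤ →₀ ℂ)) (hU : ∀ v ∈ U, I21 v ∈ U) :
    ∀ v ∈ U, ∀ k : ℤ, Finsupp.single k (v k) ∈ U := by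
  suffices H : ∀ n : ℕ, ∀ v ∈ U, v.support.card = n → ∀ k, Finsupp.single k (v k) ∈ U by
    intro v hv k; exact H v.support.card v hv rfl k
  intro n
  induction n using Nat.strong_induction_on with
  | _ n ih =>
    intro v hv hcard k
    by_cases hk : v k = 0
    · rw [hk, Finsupp.single_zero]; exact U.zero_mem
    by_cases hsub : v.support ⊆ {k}
    · have hveq : v = Finsupp.single k (v k) := by
        ext m
        by_cases hm : m = k
        · subst hm; rw [Finsupp.single_eq_same]
        · have : m ∉ v.support := fun hmem => hm (Finset.mem_singleton.mp (hsub hmem))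
          rw [Finsupp.notMem_support_iff] at this
          rw [this, Finsupp.single_apply, if_neg (Ne.symm hm)]
      rw [← hveq]; exact hv
    · obtain ⟨j, hj, hjk⟩ : ∃ j ∈ v.support, j ≠ k := by
        by_contra hc
        push_neg at hc
        exact hsub fun m hm => Finset.mem_singleton.mpr (hc m hm)
      set w : ℤ →₀ ℂ := I21 v - lam h j • v with hw
      have hwU : w ∈ U := U.sub_mem (hU v hv) (U.smul_mem _ hv)
      have hwc : ∀ m, w m = (lam h m - lam h j) * v m := by
        intro m
        rw [hw, Finsupp.sub_apply, Finsupp.smul_apply, I21_coord hI21, smul_eq_mul, sub_mul]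
      have hsupp : w.support ⊆ v.support.erase j := by
        intro m hm
        rw [Finsupp.mem_support_iff] at hm
        rw [Finset.mem_erase, Finsupp.mem_support_iff]
        constructor
        · rintro rfl; exact hm (by rw [hwc, sub_self, zero_mul])
        · intro hvm; exact hm (by rw [hwc, hvm, mul_zero])
      have hcard' : w.support.card < n := by
        calc w.support.card ≤ (v.support.erase j).card := Finset.card_le_card hsupp
        _ < v.support.card := Finset.card_erase_lt_of_mem hj
        _ = n := hcard
      have hwk := ih w.support.card hcard' w hwU rfl k
      have hne : lam h k - lam h j ≠ 0 := by
        rw [sub_ne_zero]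
        intro he
        exact hjk (lam_inj hh he.symm)
      have : Finsupp.single k (v k) = (lam h k - lam h j)⁻¹ • Finsupp.single k (w k) := by
        rw [hwc, Finsupp.smul_single]
        congr 1
        rw [smul_eq_mul, ← mul_assoc, inv_mul_cancel₀ hne, one_mul]
      rw [this]
      exact U.smul_mem _ hwk

lemma single_mem_of_coord (hh : ∀ r : ℚ, h ≠ 2 * Real.pi * Complex.I * r)
    (hI21 : ∀ k : ℤ, I21 (Finsupp.single k 1) =
      (Complex.I * qnum h ((0 : ℂ) + k)) • Finsupp.single k 1)
    (U : Submodule ℂ (ℤ →₀ ℂ)) (hU : ∀ v ∈ U, I21 v ∈ U)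
    {v : ℤ →₀ ℂ} (hv : v ∈ U) {k : ℤ} (hk : v k ≠ 0) : Finsupp.single k 1 ∈ U := by
  have h1 := extract hh hI21 U hU v hv k
  have : Finsupp.single k (1:ℂ) = (v k)⁻¹ • Finsupp.single k (v k) := by
    rw [Finsupp.smul_single, smul_eq_mul, inv_mul_cancel₀ hk]
  rw [this]
  exact U.smul_mem _ h1

end

section
variable {h : ℂ} {I21 I32 : Module.End ℂ (ℤ →₀ ℂ)}

lemma step_down (hh : ∀ r : ℚ, h ≠ 2 * Real.pi * Complex.I * r)
    (hI21 : ∀ k : ℤ, I21 (Finsupp.single k 1) =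
      (Complex.I * qnum h ((0 : ℂ) + k)) • Finsupp.single k 1)
    (hI32 : ∀ k : ℤ, I32 (Finsupp.single k 1) =
      gtA h (1 : ℂ) (0 : ℂ) k • Finsupp.single (k + 1) 1 - Finsupp.single (k - 1) 1)
    (U : Submodule ℂ (ℤ →₀ ℂ)) (hU21 : ∀ v ∈ U, I21 v ∈ U) (hU32 : ∀ v ∈ U, I32 v ∈ U)
    {k : ℤ} (hk : Finsupp.single k 1 ∈ U) : Finsupp.single (k-1) 1 ∈ U := by
  have hu : gtA h 1 0 k • Finsupp.single (k+1) 1 - Finsupp.single (k-1) 1 ∈ U := by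
    rw [← hI32 k]; exact hU32 _ hk
  apply single_mem_of_coord hh hI21 U hU21 hu
  rw [Finsupp.sub_apply, Finsupp.smul_apply, Finsupp.single_apply, if_neg (by omega),
    Finsupp.single_eq_same, smul_zero, zero_sub]
  norm_num

lemma step_up (hh : ∀ r : ℚ, h ≠ 2 * Real.pi * Complex.I * r)
    (hI21 : ∀ k : ℤ, I21 (Finsupp.single k 1) =
      (Complex.I * qnum h ((0 : ℂ) + k)) • Finsupp.single k 1)
    (hI32 : ∀ k : ℤ, I32 (Finsupp.single k 1) =
      gtA h (1 : ℂ) (0 : ℂ) k • Finsupp.single (k + 1) 1 - Finsupp.single (k - 1) 1)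
    (U : Submodule ℂ (ℤ →₀ ℂ)) (hU21 : ∀ v ∈ U, I21 v ∈ U) (hU32 : ∀ v ∈ U, I32 v ∈ U)
    {k : ℤ} (h2 : k ≠ -2) (h1 : k ≠ 1)
    (hk : Finsupp.single k 1 ∈ U) : Finsupp.single (k+1) 1 ∈ U := by
  have hu : gtA h 1 0 k • Finsupp.single (k+1) 1 - Finsupp.single (k-1) 1 ∈ U := by
    rw [← hI32 k]; exact hU32 _ hk
  apply single_mem_of_coord hh hI21 U hU21 hu
  rw [Finsupp.sub_apply, Finsupp.smul_apply, Finsupp.single_eq_same,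
    Finsupp.single_apply, if_neg (by omega), smul_eq_mul, mul_one, sub_zero]
  exact gtA_ne_zero hh h2 h1

lemma ladder_down (hh : ∀ r : ℚ, h ≠ 2 * Real.pi * Complex.I * r)
    (hI21 : ∀ k : ℤ, I21 (Finsupp.single k 1) =
      (Complex.I * qnum h ((0 : ℂ) + k)) • Finsupp.single k 1)
    (hI32 : ∀ k : ℤ, I32 (Finsupp.single k 1) =
      gtA h (1 : ℂ) (0 : ℂ) k • Finsupp.single (k + 1) 1 - Finsupp.single (k - 1) 1)
    (U : Submodule ℂ (ℤ →₀ ℂ)) (hU21 : ∀ v ∈ U, I21 v ∈ U) (hU32 : ∀ v ∈ U, I32 v ∈ U)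
    {k : ℤ} (hk : Finsupp.single k 1 ∈ U) {m : ℤ} (hm : m ≤ k) : Finsupp.single m 1 ∈ U := by
  have key : ∀ d : ℕ, Finsupp.single (k - d) 1 ∈ U := by
    intro d
    induction d with
    | zero => simpa using hk
    | succ d ihd =>
      have := step_down hh hI21 hI32 U hU21 hU32 ihd
      have he : k - (d:ℤ) - 1 = k - ((d:ℕ)+1 : ℕ) := by push_cast; ring
      rwa [he] at this
  have : m = k - ((k - m).toNat : ℤ) := by omega
  rw [this]
  exact key _

lemma ladder_up (hh : ∀ r : ℚ, h ≠ 2 * Real.pi * Complex.I * r)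
    (hI21 : ∀ k : ℤ, I21 (Finsupp.single k 1) =
      (Complex.I * qnum h ((0 : ℂ) + k)) • Finsupp.single k 1)
    (hI32 : ∀ k : ℤ, I32 (Finsupp.single k 1) =
      gtA h (1 : ℂ) (0 : ℂ) k • Finsupp.single (k + 1) 1 - Finsupp.single (k - 1) 1)
    (U : Submodule ℂ (ℤ →₀ ℂ)) (hU21 : ∀ v ∈ U, I21 v ∈ U) (hU32 : ∀ v ∈ U, I32 v ∈ U)
    {k : ℤ} (hk : Finsupp.single k 1 ∈ U) {m : ℤ} (hm : k ≤ m)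
    (hcond : ∀ j : ℤ, k ≤ j → j < m → j ≠ -2 ∧ j ≠ 1) : Finsupp.single m 1 ∈ U := by
  have key : ∀ d : ℕ, k + (d:ℤ) ≤ m → Finsupp.single (k + d) 1 ∈ U := by
    intro d
    induction d with
    | zero => intro _; simpa using hk
    | succ d ihd =>
      intro hd
      have hd' : k + (d:ℤ) ≤ m := by push_cast at hd ⊢; omega
      have hdlt : k + (d:ℤ) < m := by push_cast at hd; omega
      obtain ⟨hc2, hc1⟩ := hcond (k + d) (by omega) hdlt
      have := step_up hh hI21 hI32 U hU21 hU32 hc2 hc1 (ihd hd')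
      have he : k + (d:ℤ) + 1 = k + ((d:ℕ)+1 : ℕ) := by push_cast; ring
      rwa [he] at this
  have : m = k + ((m - k).toNat : ℤ) := by omega
  rw [this]
  exact key _ (by omega)

end

theorem stmt_19 (h : ℂ) (hh : ∀ r : ℚ, h ≠ 2 * Real.pi * Complex.I * r)
    (I21 I32 : Module.End ℂ (ℤ →₀ ℂ))
    (hI21 : ∀ k : ℤ, I21 (Finsupp.single k 1) =
      (Complex.I * qnum h ((0 : ℂ) + k)) • Finsupp.single k 1)
    (hI32 : ∀ k : ℤ, I32 (Finsupp.single k 1) =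
      gtA h (1 : ℂ) (0 : ℂ) k • Finsupp.single (k + 1) 1 - Finsupp.single (k - 1) 1)
    (W₁ W₂ : Submodule ℂ (ℤ →₀ ℂ))
    (hW₁ : W₁ = Submodule.span ℂ {v | ∃ k : ℤ, k ≤ -2 ∧ v = Finsupp.single k 1})
    (hW₂ : W₂ = Submodule.span ℂ {v | ∃ k : ℤ, k ≤ 1 ∧ v = Finsupp.single k 1}) :
    (∀ v ∈ W₁, I21 v ∈ W₁ ∧ I32 v ∈ W₁) ∧
    (∀ v ∈ W₂, I21 v ∈ W₂ ∧ I32 v ∈ W₂) ∧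
    (⊥ < W₁ ∧ W₁ < W₂ ∧ W₂ < ⊤) ∧
    -- `W₁` is irreducible: no proper nonzero invariant subspace below `W₁`
    (∀ U : Submodule ℂ (ℤ →₀ ℂ), (∀ v ∈ U, I21 v ∈ U) → (∀ v ∈ U, I32 v ∈ U) →
      U ≤ W₁ → U = ⊥ ∨ U = W₁) ∧
    -- `W₂/W₁` is irreducible: no invariant subspace strictly between `W₁` and `W₂`
    (∀ U : Submodule ℂ (ℤ →₀ ℂ), (∀ v ∈ U, I21 v ∈ U) → (∀ v ∈ U, I32 v ∈ U) →
      W₁ ≤ U → U ≤ W₂ → U = W₁ ∨ U = W₂) ∧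
    -- `V/W₂` is irreducible: no invariant subspace strictly between `W₂` and `V`
    (∀ U : Submodule ℂ (ℤ →₀ ℂ), (∀ v ∈ U, I21 v ∈ U) → (∀ v ∈ U, I32 v ∈ U) →
      W₂ ≤ U → U = W₂ ∨ U = ⊤) := by

  -- supported characterizations
  have hsupp : ∀ b : ℤ, Submodule.span ℂ {v : ℤ →₀ ℂ | ∃ k : ℤ, k ≤ b ∧ v = Finsupp.single k 1}
      = Finsupp.supported ℂ ℂ {k : ℤ | k ≤ b} := by
    intro b
    rw [Finsupp.supported_eq_span_single]
    congr 1
    ext v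
    simp only [Set.mem_setOf_eq, Set.mem_image]
    constructor
    · rintro ⟨k, hk, rfl⟩; exact ⟨k, hk, rfl⟩
    · rintro ⟨k, hk, rfl⟩; exact ⟨k, hk, rfl⟩
  have hW₁s : W₁ = Finsupp.supported ℂ ℂ {k : ℤ | k ≤ -2} := by rw [hW₁, hsupp]
  have hW₂s : W₂ = Finsupp.supported ℂ ℂ {k : ℤ | k ≤ 1} := by rw [hW₂, hsupp]
  have hmemW₁ : ∀ v : ℤ →₀ ℂ, v ∈ W₁ ↔ ∀ x : ℤ, ¬ x ≤ -2 → v x = 0 := by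
    intro v; rw [hW₁s]; exact Finsupp.mem_supported' ℂ v
  have hmemW₂ : ∀ v : ℤ →₀ ℂ, v ∈ W₂ ↔ ∀ x : ℤ, ¬ x ≤ 1 → v x = 0 := by
    intro v; rw [hW₂s]; exact Finsupp.mem_supported' ℂ v
  have hsingleW₁ : ∀ k : ℤ, k ≤ -2 → Finsupp.single k (1:ℂ) ∈ W₁ := by
    intro k hk; rw [hW₁]; exact Submodule.subset_span ⟨k, hk, rfl⟩
  have hsingleW₂ : ∀ k : ℤ, k ≤ 1 → Finsupp.single k (1:ℂ) ∈ W₂ := by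
    intro k hk; rw [hW₂]; exact Submodule.subset_span ⟨k, hk, rfl⟩
  -- invariance of W₁
  have hinv : ∀ b : ℤ, (b = -2 ∨ b = 1) → ∀ v ∈ Submodule.span ℂ
      {v : ℤ →₀ ℂ | ∃ k : ℤ, k ≤ b ∧ v = Finsupp.single k 1},
      I21 v ∈ Submodule.span ℂ {v : ℤ →₀ ℂ | ∃ k : ℤ, k ≤ b ∧ v = Finsupp.single k 1} ∧
      I32 v ∈ Submodule.span ℂ {v : ℤ →₀ ℂ | ∃ k : ℤ, k ≤ b ∧ v = Finsupp.single k 1} := by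
    intro b hb
    set S := {v : ℤ →₀ ℂ | ∃ k : ℤ, k ≤ b ∧ v = Finsupp.single k 1} with hS
    have h21 : Submodule.span ℂ S ≤ (Submodule.span ℂ S).comap I21 := by
      apply Submodule.span_le.mpr
      rintro v ⟨k, hk, rfl⟩
      rw [SetLike.mem_coe, Submodule.mem_comap, hI21 k]
      exact Submodule.smul_mem _ _ (Submodule.subset_span ⟨k, hk, rfl⟩)
    have h32 : Submodule.span ℂ S ≤ (Submodule.span ℂ S).comap I32 := by
      apply Submodule.span_le.mpr
      rintro v ⟨k, hk, rfl⟩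
      rw [SetLike.mem_coe, Submodule.mem_comap, hI32 k]
      by_cases hkb : k = b
      · subst hkb
        have hz : gtA h 1 0 k = 0 := by
          rcases hb with hb | hb <;> rw [hb] <;> [exact gtA_neg_two; exact gtA_one]
        rw [hz, zero_smul, zero_sub]
        exact Submodule.neg_mem _ (Submodule.subset_span ⟨k - 1, by omega, rfl⟩)
      · exact Submodule.sub_mem _
          (Submodule.smul_mem _ _ (Submodule.subset_span ⟨k + 1, by omega, rfl⟩))
          (Submodule.subset_span ⟨k - 1, by omega, rfl⟩)
    exact fun v hv => ⟨h21 hv, h32 hv⟩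
  refine ⟨?_, ?_, ⟨?_, ?_, ?_⟩, ?_, ?_, ?_⟩
  · rw [hW₁]; exact hinv (-2) (Or.inl rfl)
  · rw [hW₂]; exact hinv 1 (Or.inr rfl)
  · -- ⊥ < W₁
    rw [bot_lt_iff_ne_bot, Submodule.ne_bot_iff]
    refine ⟨Finsupp.single (-2) 1, hsingleW₁ (-2) le_rfl, ?_⟩
    intro hc
    have := congrArg (fun f : ℤ →₀ ℂ => f (-2)) hc
    simp only [Finsupp.single_eq_same, Finsupp.coe_zero, Pi.zero_apply] at this
    exact one_ne_zero this
  · -- W₁ < W₂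
    rw [SetLike.lt_iff_le_and_exists]
    refine ⟨by rw [hW₁, hW₂]; exact Submodule.span_mono (fun v ⟨k, hk, hv⟩ => ⟨k, by omega, hv⟩),
      Finsupp.single 0 1, hsingleW₂ 0 (by norm_num), ?_⟩
    intro hc
    have := (hmemW₁ _).mp hc 0 (by norm_num)
    rw [Finsupp.single_eq_same] at this
    exact one_ne_zero this
  · -- W₂ < ⊤
    rw [lt_top_iff_ne_top]
    intro hc
    have : Finsupp.single (2:ℤ) (1:ℂ) ∈ W₂ := by rw [hc]; trivial
    have := (hmemW₂ _).mp this 2 (by norm_num)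
    rw [Finsupp.single_eq_same] at this
    exact one_ne_zero this
  · -- W₁ irreducible
    intro U hU21 hU32 hle
    by_cases hbot : U = ⊥
    · exact Or.inl hbot
    right
    obtain ⟨v, hvU, hv0⟩ := (Submodule.ne_bot_iff U).mp hbot
    obtain ⟨k, hk⟩ : ∃ k : ℤ, v k ≠ 0 := by
      by_contra hc; push_neg at hc
      exact hv0 (Finsupp.ext hc)
    have hk2 : k ≤ -2 := by
      by_contra hc
      exact hk ((hmemW₁ _).mp (hle hvU) k hc)
    have hsk : Finsupp.single k (1:ℂ) ∈ U := single_mem_of_coord hh hI21 U hU21 hvU hk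
    refine le_antisymm hle ?_
    rw [hW₁]
    apply Submodule.span_le.mpr
    rintro w ⟨m, hm, rfl⟩
    by_cases hmk : m ≤ k
    · exact ladder_down hh hI21 hI32 U hU21 hU32 hsk hmk
    · exact ladder_up hh hI21 hI32 U hU21 hU32 hsk (by omega)
        (fun j hj1 hj2 => by omega)
  · -- W₂/W₁ irreducible
    intro U hU21 hU32 hle₁ hle₂
    by_cases hcase : U ≤ W₁
    · exact Or.inl (le_antisymm hcase hle₁)
    right
    obtain ⟨v, hvU, hvW₁⟩ := SetLike.not_le_iff_exists.mp hcase
    obtain ⟨k, hknle, hk⟩ : ∃ k : ℤ, ¬ k ≤ -2 ∧ v k ≠ 0 := by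
      by_contra hc; push_neg at hc
      exact hvW₁ ((hmemW₁ v).mpr fun x hx => hc x (by omega))
    have hk1 : k ≤ 1 := by
      by_contra hc
      exact hk ((hmemW₂ _).mp (hle₂ hvU) k hc)
    have hsk : Finsupp.single k (1:ℂ) ∈ U := single_mem_of_coord hh hI21 U hU21 hvU hk
    refine le_antisymm hle₂ ?_
    rw [hW₂]
    apply Submodule.span_le.mpr
    rintro w ⟨m, hm, rfl⟩
    by_cases hmk : m ≤ k
    · exact ladder_down hh hI21 hI32 U hU21 hU32 hsk hmk
    · exact ladder_up hh hI21 hI32 U hU21 hU32 hsk (by omega)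
        (fun j hj1 hj2 => by omega)
  · -- V/W₂ irreducible
    intro U hU21 hU32 hle
    by_cases hcase : U ≤ W₂
    · exact Or.inl (le_antisymm hcase hle)
    right
    obtain ⟨v, hvU, hvW₂⟩ := SetLike.not_le_iff_exists.mp hcase
    obtain ⟨k, hknle, hk⟩ : ∃ k : ℤ, ¬ k ≤ 1 ∧ v k ≠ 0 := by
      by_contra hc; push_neg at hc
      exact hvW₂ ((hmemW₂ v).mpr fun x hx => hc x (by omega))
    have hsk : Finsupp.single k (1:ℂ) ∈ U := single_mem_of_coord hh hI21 U hU21 hvU hk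
    rw [Submodule.eq_top_iff']
    intro x
    have hsingles : ∀ m : ℤ, Finsupp.single m (1:ℂ) ∈ U := by
      intro m
      by_cases hmk : m ≤ k
      · exact ladder_down hh hI21 hI32 U hU21 hU32 hsk hmk
      · exact ladder_up hh hI21 hI32 U hU21 hU32 hsk (by omega)
          (fun j hj1 hj2 => by omega)
    rw [← Finsupp.sum_single x, Finsupp.sum]
    apply Submodule.sum_mem
    intro m _
    rw [single_eq_smul]
    exact U.smul_mem _ (hsingles m)
end
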